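/- arXiv:math/0504460 — 3 statements merged into one kernel-verified Lean document; each statement's English description precedes it below -/
import Mathlib

section
/- Let F be a field, let z, w ∈ F be units, and let μ be a partition such that z^{2h(x)} ≠ 1 for every cell x ∈ μ. With W_μ(z, w) = ∏_{x∈μ} (w^{−1} z^{c(x)} − w z^{−c(x)}) / (z^{h(x)} − z^{−h(x)}) (the quantum dimension with q = z², e^{−t} = w²), one has W_{μ^t}(z^{−1}, w) = W_{μ^t}(z, w^{−1}) = (−1)^{|μ|} W_μ(z, w), where μ^t is the conjugate partition. -/
/-- A partition `μ = (μ_1 ≥ μ_2 ≥ …)`: a weakly decreasing, eventually zero sequence of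
naturals.  We index parts from `0`, so `part i` is the part `μ_{i+1}` of the paper. -/
structure Partition' where
  part : ℕ → ℕ
  antitone' : ∀ ⦃i j : ℕ⦄, i ≤ j → part j ≤ part i
  eventually_zero : ∃ N, ∀ n, N ≤ n → part n = 0

namespace Partition'

/-- The Young diagram of `μ`, as a set of (0-indexed) cells `(i, j)`, `j < μ_{i+1}`. -/
def cellsSet (μ : Partition') : Set (ℕ × ℕ) := {x | x.2 < μ.part x.1}

lemma cellsSet_finite (μ : Partition') : μ.cellsSet.Finite := by
  obtain ⟨N, hN⟩ := μ.eventually_zero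
  have hsub : μ.cellsSet ⊆ Set.Iio N ×ˢ Set.Iio (μ.part 0) := by
    rintro ⟨i, j⟩ hx
    have hj : j < μ.part i := hx
    refine Set.mem_prod.mpr ⟨?_, ?_⟩
    · by_contra h
      try push_neg at h
      simp only [Set.mem_Iio, not_lt] at h
      rw [hN i h] at hj
      omega
    · exact Set.mem_Iio.mpr (lt_of_lt_of_le hj (μ.antitone' (Nat.zero_le i)))
  exact ((Set.finite_Iio N).prod (Set.finite_Iio (μ.part 0))).subset hsub

/-- The cells of the Young diagram of `μ`, as a finite set. -/
noncomputable def cells (μ : Partition') : Finset (ℕ × ℕ) := μ.cellsSet_finite.toFinset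

/-- `|μ|`, the size (number of cells, i.e. sum of the parts) of `μ`. -/
noncomputable def size (μ : Partition') : ℕ := μ.cells.card

lemma row_finite (μ : Partition') (j : ℕ) : {i : ℕ | j < μ.part i}.Finite := by
  obtain ⟨N, hN⟩ := μ.eventually_zero
  apply (Set.finite_Iio N).subset
  intro i hi
  simp only [Set.mem_setOf_eq] at hi
  simp only [Set.mem_Iio]
  by_contra h
  push_neg at h
  rw [hN i h] at hi
  omega

/-- The conjugate (transposed) partition `μ^t`: `(μ^t)_{j+1} = #{i : μ_{i+1} > j}`. -/
noncomputable def conj (μ : Partition') : Partition' where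
  part j := Nat.card {i : ℕ | j < μ.part i}
  antitone' := by
    intro j k hjk
    exact Nat.card_mono (μ.row_finite j) (fun i hi => lt_of_le_of_lt hjk hi)
  eventually_zero := by
    refine ⟨μ.part 0, fun j hj => ?_⟩
    have h : {i : ℕ | j < μ.part i} = (∅ : Set ℕ) := by
      ext i
      simp only [Set.mem_setOf_eq, Set.mem_empty_iff_false, iff_false, not_lt]
      exact le_trans (μ.antitone' (Nat.zero_le i)) hj
    try simp only []
    rw [h]
    simp

/-- The content `c(x) = j - i` of a (0-indexed) cell `x = (i,j)`. -/
def content (x : ℕ × ℕ) : ℤ := (x.2 : ℤ) - (x.1 : ℤ)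

/-- The hook length `h(x) = μ_i + (μ^t)_j - i - j + 1` (1-indexed) of a cell of `μ`,
as an integer. -/
noncomputable def hook (μ : Partition') (x : ℕ × ℕ) : ℤ :=
  (μ.part x.1 : ℤ) + (μ.conj.part x.2 : ℤ) - (x.1 : ℤ) - (x.2 : ℤ) - 1

/-- `n(μ) = Σ_i (i-1) μ_i` (1-indexed), i.e. `Σ_i i * μ_{i+1}` (0-indexed). -/
noncomputable def nstat (μ : Partition') : ℕ := ∑ᶠ i : ℕ, i * μ.part i

/-- The empty partition. -/
def empty : Partition' := ⟨fun _ => 0, fun _ _ _ => le_rfl, ⟨0, fun _ _ => rfl⟩⟩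

/-- The number of (nonzero) parts of `μ`. -/
noncomputable def length (μ : Partition') : ℕ := μ.conj.part 0

end Partition'

/-- The quantum dimension `W_μ(z, w)` (the large-`N` Chern–Simons invariant of the unknot,
written with `q = z²` and `e^{−t} = w²`):
`W_μ(z,w) = ∏_{x∈μ} (w⁻¹ z^{c(x)} − w z^{−c(x)}) / (z^{h(x)} − z^{−h(x)})`. -/
noncomputable def Wdim {F : Type*} [Field F] (μ : Partition') (z w : F) : F :=
  ∏ x ∈ μ.cells, (w⁻¹ * z ^ Partition'.content x - w * z ^ (-Partition'.content x)) /
    (z ^ μ.hook x - z ^ (-μ.hook x))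

namespace Partition'

lemma mem_cells {μ : Partition'} {x : ℕ × ℕ} : x ∈ μ.cells ↔ x.2 < μ.part x.1 := by
  simp [cells, cellsSet]

lemma ext {μ ν : Partition'} (h : μ.part = ν.part) : μ = ν := by
  cases μ
  cases ν
  congr

/-- Column `j` of `μ` is an initial segment of `ℕ`, so it is the range of its own length. -/
lemma setOf_lt_part_eq_Iio (μ : Partition') (j : ℕ) :
    {i | j < μ.part i} = Set.Iio (μ.conj.part j) := by
  have hlower : IsLowerSet {i | j < μ.part i} := fun a b hba ha => ha.trans_le (μ.antitone' hba)
  obtain huniv | ⟨a, ha⟩ := hlower.eq_univ_or_Iio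
  · exact absurd (huniv ▸ μ.row_finite j) Set.infinite_univ
  · change _ = Set.Iio (Nat.card {i | j < μ.part i})
    rw [ha, Nat.card_coe_set_eq, Set.ncard_Iio_nat]

lemma lt_conj_part_iff (μ : Partition') (i j : ℕ) : i < μ.conj.part j ↔ j < μ.part i := by
  rw [← Set.mem_Iio, ← setOf_lt_part_eq_Iio, Set.mem_ofPred_eq]

lemma conj_conj (μ : Partition') : μ.conj.conj = μ := by
  refine ext (funext fun i => ?_)
  rw [← Set.ncard_Iio_nat (μ.conj.conj.part i), ← setOf_lt_part_eq_Iio]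
  simp_rw [lt_conj_part_iff]
  exact Set.ncard_Iio_nat _

lemma swap_mem_cells_conj {μ : Partition'} {x : ℕ × ℕ} :
    x.swap ∈ μ.conj.cells ↔ x ∈ μ.cells := by
  simp only [mem_cells, Prod.fst_swap, Prod.snd_swap, lt_conj_part_iff]

lemma prod_cells_conj {M : Type*} [CommMonoid M] (μ : Partition') (f : ℕ × ℕ → M) :
    ∏ x ∈ μ.conj.cells, f x = ∏ x ∈ μ.cells, f x.swap :=
  Finset.prod_nbij' Prod.swap Prod.swap
    (fun x hx => swap_mem_cells_conj.mp (by rwa [Prod.swap_swap]))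
    (fun _ hx => swap_mem_cells_conj.mpr hx)
    (fun x _ => x.swap_swap) (fun x _ => x.swap_swap) (fun x _ => by rw [Prod.swap_swap])

lemma content_swap (x : ℕ × ℕ) : content x.swap = -content x := by
  simp only [content, Prod.fst_swap, Prod.snd_swap, neg_sub]

lemma hook_conj_swap (μ : Partition') (x : ℕ × ℕ) : μ.conj.hook x.swap = μ.hook x := by
  simp only [hook, Prod.fst_swap, Prod.snd_swap, conj_conj]
  ring

end Partition'

open Partition'

lemma Wdim_conj {F : Type*} [Field F] (μ : Partition') (z w : F) :
    Wdim μ.conj z w = ∏ x ∈ μ.cells,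
      (w⁻¹ * z ^ (-content x) - w * z ^ content x) / (z ^ μ.hook x - z ^ (-μ.hook x)) := by
  rw [Wdim, prod_cells_conj]
  simp only [content_swap, hook_conj_swap, neg_neg]

/-- Each factor picks up its sign from the numerator. -/
lemma Wdim_conj_inv_right {F : Type*} [Field F] (μ : Partition') (z w : F) :
    Wdim μ.conj z w⁻¹ = (-1) ^ μ.size * Wdim μ z w := by
  rw [Wdim_conj, Wdim, size, ← Finset.prod_neg]
  refine Finset.prod_congr rfl fun x _ => ?_
  rw [inv_inv, ← neg_div, neg_sub]

/-- Each factor picks up its sign from the denominator. -/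
lemma Wdim_conj_inv_left {F : Type*} [Field F] (μ : Partition') (z w : F) :
    Wdim μ.conj z⁻¹ w = (-1) ^ μ.size * Wdim μ z w := by
  rw [Wdim_conj, Wdim, size, ← Finset.prod_neg]
  refine Finset.prod_congr rfl fun x _ => ?_
  rw [inv_zpow', inv_zpow', inv_zpow', inv_zpow', neg_neg, neg_neg, ← neg_sub (z ^ μ.hook x),
    div_neg]

theorem quantum_dimension_conj_symmetry_general {F : Type*} [Field F] (z w : F)
    (μ : Partition') :
    Wdim μ.conj z⁻¹ w = Wdim μ.conj z w⁻¹ ∧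
    Wdim μ.conj z w⁻¹ = (-1 : F) ^ μ.size * Wdim μ z w :=
  ⟨(Wdim_conj_inv_left μ z w).trans (Wdim_conj_inv_right μ z w).symm,
    Wdim_conj_inv_right μ z w⟩

/-- Equation (30) of Proposition 4.1: `W_{μᵗ}(z⁻¹, w) = W_{μᵗ}(z, w⁻¹) = (−1)^{|μ|} W_μ(z, w)`. -/
theorem quantum_dimension_conj_symmetry {F : Type*} [Field F] (z w : F)
    (hz : z ≠ 0) (hw : w ≠ 0) (μ : Partition')
    (hroot : ∀ x ∈ μ.cells, z ^ (2 * μ.hook x) ≠ 1) :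
    Wdim μ.conj z⁻¹ w = Wdim μ.conj z w⁻¹ ∧
    Wdim μ.conj z w⁻¹ = (-1 : F) ^ μ.size * Wdim μ z w :=
  quantum_dimension_conj_symmetry_general z w μ
end

section
/- Let μ be a partition and let q ∈ ℂ with 0 < |q| < 1. Then the double series Σ_{i,j≥1} ( q^{μ_i + j − i} − q^{j − i} ) converges absolutely and − Σ_{i,j≥1} ( q^{μ_i + j − i} − q^{j − i} ) = Σ_{(i,j)∈μ} q^{j−i}, the finite sum of q raised to the contents of the cells of μ. -/
/-
Each term factors as `q^{-i} (q^{μ_i} - 1) · q^j`. The factor in `i` vanishes once `μ_i = 0`,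
so the double series is a finite sum times a geometric series. Finally
`-(q^{μ_i} - 1) / (1 - q) = Σ_{j < μ_i} q^j` turns the `i`-th summand into the sum of
`q^{c(x)}` over the cells `x` in row `i` of `μ`.
-/

open Finset

namespace Partition'

theorem sum_cells_eq_sum_range_sum_range {M : Type*} [AddCommMonoid M] (μ : Partition') {N : ℕ}
    (hN : ∀ n, N ≤ n → μ.part n = 0) (f : ℕ × ℕ → M) :
    ∑ x ∈ μ.cells, f x = ∑ i ∈ range N, ∑ j ∈ range (μ.part i), f (i, j) := by
  refine sum_finset_product _ _ _ fun x => ?_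
  simp only [cells, Set.Finite.mem_toFinset, cellsSet, Set.mem_ofPred_eq, mem_range]
  refine ⟨fun hx => ⟨?_, hx⟩, And.right⟩
  by_contra h
  rw [hN _ (not_lt.1 h)] at hx
  exact Nat.not_lt_zero _ hx

end Partition'

section

variable {K : Type*} [Field K] {q : K}

theorem zpow_add_sub_sub_zpow_sub (hq : q ≠ 0) (m j i : ℕ) :
    q ^ ((m : ℤ) + j - i) - q ^ ((j : ℤ) - i) = (q ^ m - 1) * q ^ (-(i : ℤ)) * q ^ j := by
  simp only [sub_eq_add_neg, zpow_add₀ hq, zpow_natCast]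
  ring

theorem sum_range_zpow_sub (hq : q ≠ 0) (hq1 : q ≠ 1) (m i : ℕ) :
    ∑ j ∈ range m, q ^ ((j : ℤ) - i) = -((q ^ m - 1) * q ^ (-(i : ℤ)) * (1 - q)⁻¹) := by
  simp only [sub_eq_add_neg (_ : ℤ), zpow_add₀ hq, zpow_natCast, ← sum_mul, geom_sum_eq hq1]
  field_simp
  ring

end

/-- Equation (70): for `0 < |q| < 1`, the double series
`Σ_{i,j≥1} (q^{μ_i + j − i} − q^{j−i})` converges absolutely and its negative equals
the content polynomial `f_μ(q) = Σ_{x∈μ} q^{c(x)}`. -/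
theorem content_sum_as_double_series (μ : Partition') (q : ℂ) (h0 : 0 < ‖q‖) (h1 : ‖q‖ < 1) :
    Summable (fun p : ℕ × ℕ =>
      ‖q ^ ((μ.part p.1 : ℤ) + (p.2 : ℤ) - (p.1 : ℤ)) - q ^ ((p.2 : ℤ) - (p.1 : ℤ))‖) ∧
    -∑' p : ℕ × ℕ,
        (q ^ ((μ.part p.1 : ℤ) + (p.2 : ℤ) - (p.1 : ℤ)) - q ^ ((p.2 : ℤ) - (p.1 : ℤ))) =
      ∑ x ∈ μ.cells, q ^ Partition'.content x := by
  have hq : q ≠ 0 := norm_pos_iff.1 h0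
  have hq1 : q ≠ 1 := by rintro rfl; simp at h1
  obtain ⟨N, hN⟩ := μ.eventually_zero
  set a : ℕ → ℂ := fun i => (q ^ μ.part i - 1) * q ^ (-(i : ℤ))
  have ha : ∀ i ∉ range N, a i = 0 := fun i hi => by
    simp [a, hN i (by simpa using hi)]
  have ha_norm : Summable fun i => ‖a i‖ :=
    summable_of_ne_finset_zero (s := range N) fun i hi => by simp [ha i hi]
  have hgeom : Summable fun j : ℕ => ‖q ^ j‖ := by
    simpa only [norm_pow] using summable_geometric_of_lt_one h0.le h1
  simp only [zpow_add_sub_sub_zpow_sub hq]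
  refine ⟨ha_norm.mul_norm hgeom, ?_⟩
  rw [← tsum_mul_tsum_of_summable_norm ha_norm hgeom, tsum_eq_sum ha,
    tsum_geometric_of_norm_lt_one h1, sum_mul, ← sum_neg_distrib,
    μ.sum_cells_eq_sum_range_sum_range hN]
  exact sum_congr rfl fun i _ => (sum_range_zpow_sub hq hq1 _ _).symm
end

section
/- In the ring ℚ[a][[q, Q, Q_m]] of formal power series in q, Q, Q_m with polynomial coefficients in a, the following identity holds: exp( Σ_{n≥1} q^n (1 − a^n)² ( − Q^n − Q_m^n + 2 (Q Q_m)^n ) / ( n (1 − (Q Q_m)^n)(1 − q^n)² ) ) = ∏_{k=0}^∞ ∏_{l=1}^∞ [ ( (1 − Q^{k+1} Q_m^{k} q^{l})(1 − a² Q^{k+1} Q_m^{k} q^{l}) / (1 − a Q^{k+1} Q_m^{k} q^{l})² )^{l} · ( (1 − Q^{k} Q_m^{k+1} q^{l})(1 − a² Q^{k} Q_m^{k+1} q^{l}) / (1 − a Q^{k} Q_m^{k+1} q^{l})² )^{l} · ( (1 − a Q^{k+1} Q_m^{k+1} q^{l})² / ( (1 − Q^{k+1} Q_m^{k+1} q^{l})(1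 − a² Q^{k+1} Q_m^{k+1} q^{l}) ) )^{2l} ], where 1/(1 − (Q Q_m)^n), 1/(1 − q^n) and the reciprocals of the product factors are expanded as geometric series, and the infinite product converges coefficientwise (each factor is 1 plus terms of positive degree in q and in Q or Q_m). -/
/-- The formal exponential of a multivariate formal power series (intended for series with
zero constant term): coefficientwise, `exp f = Σ_{m≥0} f^m / m!`; for a series with zero
constant term the coefficient at a multidegree `d` only receives contributions from
`m ≤ |d|`, so the sum below is the full exponential. -/
noncomputable def expPS {σ : Type} {R : Type*} [CommRing R] [Algebra ℚ R]
    (f : MvPowerSeries σ R) : MvPowerSeries σ R :=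
  fun d => ∑ m ∈ Finset.range (d.sum (fun _ k => k) + 1),
    (m.factorial : ℚ)⁻¹ • (MvPowerSeries.coeff (R := R) d (f ^ m))

/-- The formal exponential of a one-variable formal power series (intended for series with
zero constant term): coefficientwise, `exp f = Σ_{m≥0} f^m / m!`. -/
noncomputable def expPS1 {R : Type*} [CommRing R] [Algebra ℚ R]
    (f : PowerSeries R) : PowerSeries R :=
  PowerSeries.mk fun k => ∑ m ∈ Finset.range (k + 1),
    (m.factorial : ℚ)⁻¹ • (PowerSeries.coeff (R := R) k (f ^ m))

/-- The multidegree `q^{i} Q^{j} Q_m^{k}` in `ℚ[a][[q, Q, Q_m]]` (`q` has index `0`,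
`Q` index `1`, `Q_m` index `2`). -/
noncomputable def deg3 (i j k : ℕ) : Fin 3 →₀ ℕ :=
  Finsupp.single 0 i + Finsupp.single 1 j + Finsupp.single 2 k

/-- The argument of the exponential in Theorem 6.5: the series
`Σ_{n≥1} qⁿ (1 − aⁿ)² (−Qⁿ − Q_mⁿ + 2(QQ_m)ⁿ) / (n (1 − (QQ_m)ⁿ)(1 − qⁿ)²)`
in `ℚ[a][[q, Q, Q_m]]`, with the geometric expansions
`1/(1 − (QQ_m)ⁿ) = Σ_{s≥0} (QQ_m)^{ns}` and `qⁿ/(1 − qⁿ)² = Σ_{l≥1} l q^{nl}`. -/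
noncomputable def expArg65 : MvPowerSeries (Fin 3) (Polynomial ℚ) :=
  fun d => ∑ᶠ (n : ℕ) (s : ℕ) (l : ℕ),
    if 1 ≤ n ∧ 1 ≤ l then
      (((n : ℚ))⁻¹ * (l : ℚ)) • (((1 - Polynomial.X ^ n) ^ 2 : Polynomial ℚ) *
        ((if d = deg3 (n * l) (n * s + n) (n * s) then (-1 : Polynomial ℚ) else 0) +
         (if d = deg3 (n * l) (n * s) (n * s + n) then (-1 : Polynomial ℚ) else 0) +
         (if d = deg3 (n * l) (n * s + n) (n * s + n) then (2 : Polynomial ℚ) else 0)))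
    else 0

/-- The monomial `c · qˡ Q^{j} Q_m^{k}`. -/
noncomputable def mon3 (l j k : ℕ) (c : Polynomial ℚ) : MvPowerSeries (Fin 3) (Polynomial ℚ) :=
  MvPowerSeries.monomial (R := Polynomial ℚ) (deg3 l j k) c

/-- The `(k, l)`-th factor of the triple infinite product of Theorem 6.5:
`((1−Q^{k+1}Q_m^k qˡ)(1−a²Q^{k+1}Q_m^k qˡ)/(1−aQ^{k+1}Q_m^k qˡ)²)ˡ`
`· ((1−Q^kQ_m^{k+1} qˡ)(1−a²Q^kQ_m^{k+1} qˡ)/(1−aQ^kQ_m^{k+1} qˡ)²)ˡ`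
`· ((1−aQ^{k+1}Q_m^{k+1} qˡ)²/((1−Q^{k+1}Q_m^{k+1} qˡ)(1−a²Q^{k+1}Q_m^{k+1} qˡ)))^{2l}`,
the reciprocals being formal inverses of power series with constant term `1`. -/
noncomputable def factor65 (k l : ℕ) : MvPowerSeries (Fin 3) (Polynomial ℚ) :=
  ((1 - mon3 l (k+1) k 1) * (1 - mon3 l (k+1) k (Polynomial.X ^ 2)) *
      (MvPowerSeries.invOfUnit (1 - mon3 l (k+1) k Polynomial.X) 1) ^ 2) ^ l *
  ((1 - mon3 l k (k+1) 1) * (1 - mon3 l k (k+1) (Polynomial.X ^ 2)) *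
      (MvPowerSeries.invOfUnit (1 - mon3 l k (k+1) Polynomial.X) 1) ^ 2) ^ l *
  ((1 - mon3 l (k+1) (k+1) Polynomial.X) ^ 2 *
      (MvPowerSeries.invOfUnit (1 - mon3 l (k+1) (k+1) 1) 1) *
      (MvPowerSeries.invOfUnit (1 - mon3 l (k+1) (k+1) (Polynomial.X ^ 2)) 1)) ^ (2 * l)

/-!
Each factor of the product is `exp` of an integer combination of the series
`log (1 - c Q^i Q_m^j q^l) = -Σ_n cⁿ (Q^i Q_m^j q^l)ⁿ / n`, obtained by substitution into
`log (1 + X)`, and `exp` turns sums into products. Expanding these logarithms, the logarithm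
`logFactor65 k l` of the `(k, l)`-th factor is exactly the part of the triple sum in the exponent
with `s = k` and the given `l`. A coefficient of `exp f` only depends on the coefficients of `f` at
smaller multidegrees, and at each of those only finitely many `(k, l)` contribute.
-/

theorem MvPowerSeries.coeff_pow_eq_zero_of_degree_lt {σ R : Type*} [CommRing R]
    {f : MvPowerSeries σ R} (hf : constantCoeff f = 0) {d : σ →₀ ℕ} {m : ℕ}
    (h : d.degree < m) : coeff d (f ^ m) = 0 :=
  coeff_eq_zero_of_constantCoeff_nilpotent (m := 1) (by simpa using hf) (by omega)

theorem MvPowerSeries.constantCoeff_monomial_of_ne_zero {σ R : Type*} [CommRing R]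
    {μ : σ →₀ ℕ} (hμ : μ ≠ 0) (c : R) : constantCoeff (monomial μ c) = 0 := by
  classical
  rw [← coeff_zero_eq_constantCoeff_apply, coeff_monomial, if_neg (Ne.symm hμ)]

theorem finsum_finsum_finsum_eq_sum {α β γ M : Type*} [AddCommMonoid M] {f : α → β → γ → M}
    {A : Finset α} {B : Finset β} {C : Finset γ}
    (h : ∀ a b c, f a b c ≠ 0 → a ∈ A ∧ b ∈ B ∧ c ∈ C) :
    ∑ᶠ (a) (b) (c), f a b c = ∑ a ∈ A, ∑ b ∈ B, ∑ c ∈ C, f a b c := by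
  have h₃ (a b) : ∑ᶠ c, f a b c = ∑ c ∈ C, f a b c :=
    finsum_eq_sum_of_support_subset _ fun c hc => (h a b c hc).2.2
  have h₂ (a) : ∑ᶠ b, ∑ c ∈ C, f a b c = ∑ b ∈ B, ∑ c ∈ C, f a b c :=
    finsum_eq_sum_of_support_subset _ fun b hb => by
      obtain ⟨c, -, hc⟩ := Finset.exists_ne_zero_of_sum_ne_zero hb
      exact (h a b c hc).2.1
  simp_rw [h₃, h₂]
  refine finsum_eq_sum_of_support_subset _ fun a ha => ?_
  obtain ⟨b, -, hb⟩ := Finset.exists_ne_zero_of_sum_ne_zero ha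
  obtain ⟨c, -, hc⟩ := Finset.exists_ne_zero_of_sum_ne_zero hb
  exact (h a b c hc).1

namespace PowerSeries

theorem eq_of_derivative_eq_mul {R : Type*} [CommRing R] [IsAddTorsionFree R] {a f g : R⟦X⟧}
    (hf : d⁄dX R f = a * f) (hg : d⁄dX R g = a * g) (h0 : constantCoeff f = constantCoeff g) :
    f = g := by
  suffices h : ∀ n, ∀ k ≤ n, coeff k f = coeff k g from ext fun n => h n n le_rfl
  intro n
  induction n with
  | zero =>
    intro k hk
    rwa [Nat.le_zero.1 hk, coeff_zero_eq_constantCoeff_apply, coeff_zero_eq_constantCoeff_apply]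
  | succ n ih =>
    intro k hk
    rcases Nat.lt_or_eq_of_le hk with hk | rfl
    · exact ih k (by omega)
    have hcoeff : coeff n (a * f) = coeff n (a * g) := by
      simp only [coeff_mul]
      exact Finset.sum_congr rfl fun p hp => by
        rw [ih p.2 (by have := Finset.HasAntidiagonal.mem_antidiagonal.1 hp; omega)]
    have h : (n + 1) • coeff (n + 1) f = (n + 1) • coeff (n + 1) g := by
      simp only [nsmul_eq_mul, Nat.cast_add, Nat.cast_one, mul_comm _ (coeff (n + 1) _),
        ← coeff_derivative, hf, hg, hcoeff]
    exact (smul_right_inj (Nat.succ_ne_zero n)).mp h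

variable {A : Type*} [CommRing A] [Algebra ℚ A]

theorem derivative_log_mul_one_add_X : d⁄dX A (log A) * (1 + X) = 1 := by
  ext n
  rcases n with _ | n <;> simp [deriv_log, mul_add, coeff_succ_mul_X, pow_succ]

/-- `exp (log (1 + X)) = 1 + X`: both sides solve `y' = y / (1 + X)` with `y(0) = 1`. -/
theorem exp_comp_log : (exp A).subst (log A) = 1 + X := by
  have := IsAddTorsionFree.of_module_rat (M := A)
  refine eq_of_derivative_eq_mul (a := d⁄dX A (log A)) ?_ ?_ ?_
  · rw [derivative_subst HasSubst.log, derivative_exp, mul_comm]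
  · rw [derivative_log_mul_one_add_X, map_add, derivative_X, derivative_one, zero_add]
  · rw [← coeff_zero_eq_constantCoeff_apply, ← coeff_zero_eq_constantCoeff_apply,
      coeff_subst' HasSubst.log, finsum_eq_single _ 0 (fun n hn => by simp [hn])]
    simp

theorem exp_subst_X_add_X :
    (exp A).subst (MvPowerSeries.X 0 + MvPowerSeries.X 1 : MvPowerSeries (Fin 2) A) =
      (exp A).subst (MvPowerSeries.X 0) * (exp A).subst (MvPowerSeries.X 1) := by
  ext e
  rw [coeff_subst_X_zero_add_X_one, coeff_subst_X_zero_subst_mul_X_one]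
  simp only [coeff_exp, ← map_natCast (algebraMap ℚ A), ← map_mul]
  rw [Nat.cast_choose ℚ (Nat.le_add_right _ _), Nat.add_sub_cancel_left]
  field_simp

/-- At `n = 0` both sides vanish, the right one because `(0 : ℚ)⁻¹ = 0`. -/
theorem coeff_log_smul_neg_pow (n : ℕ) (c : A) :
    coeff n (log A) • (-c) ^ n = -((n : ℚ)⁻¹ • c ^ n) := by
  rcases Nat.eq_zero_or_pos n with rfl | hn
  · simp
  have hsign : (-1 : A) ^ (n + 1) * (-1) ^ n = -1 := by
    rw [← pow_add, show n + 1 + n = 2 * n + 1 by ring, pow_succ, pow_mul]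
    simp
  rw [coeff_log, if_neg hn.ne']
  simp only [div_eq_mul_inv, Algebra.smul_def, map_mul, map_pow, map_neg, map_one, neg_pow c]
  linear_combination (algebraMap ℚ A (n : ℚ)⁻¹ * c ^ n) * hsign

end PowerSeries

open PowerSeries (log exp HasSubst)

section Exponential
variable {σ : Type} {R : Type*} [CommRing R] [Algebra ℚ R]

theorem coeff_expPS (f : MvPowerSeries σ R) (d : σ →₀ ℕ) :
    MvPowerSeries.coeff d (expPS f) = ∑ m ∈ Finset.range (d.degree + 1),
      (m.factorial : ℚ)⁻¹ • MvPowerSeries.coeff d (f ^ m) := rfl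

theorem expPS_eq_subst_exp {f : MvPowerSeries σ R} (hf : MvPowerSeries.constantCoeff f = 0) :
    expPS f = (exp R).subst f := by
  ext d
  rw [coeff_expPS, PowerSeries.coeff_subst (.of_constantCoeff_zero hf),
    finsum_eq_sum_of_support_subset _ (s := Finset.range (d.degree + 1))]
  · refine Finset.sum_congr rfl fun m _ => ?_
    rw [PowerSeries.coeff_exp, algebraMap_smul, one_div]
  · intro m hm
    by_contra hlt
    simp only [Finset.coe_range, Set.mem_Iio, not_lt] at hlt
    exact hm (by
      simp [MvPowerSeries.coeff_pow_eq_zero_of_degree_lt hf (d := d) (m := m) (by omega)])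

theorem expPS_zero : expPS (0 : MvPowerSeries σ R) = 1 := by
  ext d
  rw [coeff_expPS, Finset.sum_eq_single 0 (fun m _ hm => by simp [zero_pow hm]) (by simp)]
  simp

/-- Substitute `f, g` for `X₀, X₁` in `exp (X₀ + X₁) = exp X₀ * exp X₁`. -/
theorem expPS_add {f g : MvPowerSeries σ R} (hf : MvPowerSeries.constantCoeff f = 0)
    (hg : MvPowerSeries.constantCoeff g = 0) : expPS (f + g) = expPS f * expPS g := by
  open MvPowerSeries in
  have hfg : HasSubst ![f, g] := hasSubst_of_constantCoeff_zero fun i => by fin_cases i <;> simpa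
  have hX (p : MvPowerSeries (Fin 2) R) (hp : constantCoeff p = 0) : HasSubst fun _ : Unit => p :=
    hasSubst_of_constantCoeff_zero fun _ => hp
  have h := congrArg (subst ![f, g]) (PowerSeries.exp_subst_X_add_X (A := R))
  rw [subst_mul hfg, PowerSeries.subst, PowerSeries.subst, PowerSeries.subst,
    subst_comp_subst_apply (hX _ (constantCoeff_X 0)) hfg,
    subst_comp_subst_apply (hX _ (constantCoeff_X 1)) hfg,
    subst_comp_subst_apply (hX _ (by simp)) hfg] at h
  simp only [subst_add hfg, subst_X hfg, Matrix.cons_val_zero, Matrix.cons_val_one] at h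
  rwa [expPS_eq_subst_exp hf, expPS_eq_subst_exp hg, expPS_eq_subst_exp (by simp [hf, hg])]

theorem expPS_nsmul {f : MvPowerSeries σ R} (hf : MvPowerSeries.constantCoeff f = 0) (n : ℕ) :
    expPS (n • f) = expPS f ^ n := by
  induction n with
  | zero => rw [zero_smul, expPS_zero, pow_zero]
  | succ n ih => rw [succ_nsmul, expPS_add (by simp [hf]) hf, ih, pow_succ]

theorem expPS_mul_expPS_neg {f : MvPowerSeries σ R} (hf : MvPowerSeries.constantCoeff f = 0) :
    expPS f * expPS (-f) = 1 := by
  rw [← expPS_add hf (by simp [hf]), add_neg_cancel, expPS_zero]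

theorem expPS_sum {ι : Type*} (s : Finset ι) {f : ι → MvPowerSeries σ R}
    (hf : ∀ i ∈ s, MvPowerSeries.constantCoeff (f i) = 0) :
    expPS (∑ i ∈ s, f i) = ∏ i ∈ s, expPS (f i) := by
  classical
  induction s using Finset.induction_on with
  | empty => rw [Finset.sum_empty, Finset.prod_empty, expPS_zero]
  | insert a s ha ih =>
    rw [Finset.forall_mem_insert] at hf
    rw [Finset.sum_insert ha, Finset.prod_insert ha,
      expPS_add hf.1 (by rw [map_sum]; exact Finset.sum_eq_zero hf.2), ih hf.2]

theorem coeff_expPS_congr {f g : MvPowerSeries σ R} {e : σ →₀ ℕ}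
    (h : ∀ d ≤ e, MvPowerSeries.coeff d f = MvPowerSeries.coeff d g) :
    MvPowerSeries.coeff e (expPS f) = MvPowerSeries.coeff e (expPS g) := by
  classical
  have htrunc : MvPowerSeries.trunc' R e f = MvPowerSeries.trunc' R e g := by
    ext d
    simp only [MvPowerSeries.coeff_trunc']
    split_ifs with hd
    exacts [h d hd, rfl]
  have hpow (m : ℕ) : MvPowerSeries.coeff e (f ^ m) = MvPowerSeries.coeff e (g ^ m) := by
    rcases Nat.eq_zero_or_pos m with rfl | hm
    · simp
    have htrunc_pow (φ : MvPowerSeries σ R) : MvPowerSeries.coeff e (φ ^ m) =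
        MvPowerSeries.coeff e ((MvPowerSeries.trunc' R e φ : MvPowerSeries σ R) ^ m) := by
      simpa [MvPowerSeries.coeff_trunc'] using
        congrArg (MvPolynomial.coeff e) (MvPowerSeries.trunc'_trunc'_pow (n := e) hm φ).symm
    rw [htrunc_pow f, htrunc_pow g, htrunc]
  simp only [coeff_expPS, hpow]

theorem expPS_subst_log {a : MvPowerSeries σ R} (ha : MvPowerSeries.constantCoeff a = 0) :
    expPS ((log R).subst a) = 1 + a := by
  have ha' : HasSubst a := .of_constantCoeff_zero ha
  rw [expPS_eq_subst_exp
      (PowerSeries.constantCoeff_subst_eq_zero ha _ PowerSeries.constantCoeff_log),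
    ← PowerSeries.subst_comp_subst_apply HasSubst.log ha', PowerSeries.exp_comp_log,
    ← PowerSeries.coe_substAlgHom ha', map_add, map_one, PowerSeries.substAlgHom_X]

end Exponential

section LogOneSubMonomial
variable {σ : Type} {R : Type*} [CommRing R] [Algebra ℚ R] {μ : σ →₀ ℕ}

noncomputable def logOneSubMonomial (μ : σ →₀ ℕ) (c : R) : MvPowerSeries σ R :=
  (log R).subst (MvPowerSeries.monomial μ (-c))

theorem constantCoeff_logOneSubMonomial (hμ : μ ≠ 0) (c : R) :
    MvPowerSeries.constantCoeff (logOneSubMonomial μ c) = 0 :=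
  PowerSeries.constantCoeff_subst_eq_zero (MvPowerSeries.constantCoeff_monomial_of_ne_zero hμ _)
    _ PowerSeries.constantCoeff_log

theorem expPS_logOneSubMonomial (hμ : μ ≠ 0) (c : R) :
    expPS (logOneSubMonomial μ c) = 1 - MvPowerSeries.monomial μ c := by
  rw [logOneSubMonomial, expPS_subst_log (MvPowerSeries.constantCoeff_monomial_of_ne_zero hμ _),
    map_neg, sub_eq_add_neg]

theorem expPS_neg_logOneSubMonomial (hμ : μ ≠ 0) (c : R) :
    expPS (-logOneSubMonomial μ c) =
      MvPowerSeries.invOfUnit (1 - MvPowerSeries.monomial μ c) 1 := by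
  refine left_inv_eq_right_inv ?_ (MvPowerSeries.mul_invOfUnit _ _ ?_)
  · rw [← expPS_logOneSubMonomial hμ, mul_comm,
      expPS_mul_expPS_neg (constantCoeff_logOneSubMonomial hμ c)]
  · simp [MvPowerSeries.constantCoeff_monomial_of_ne_zero hμ]

theorem coeff_logOneSubMonomial [DecidableEq σ] {i : σ} (hi : 0 < μ i) (c : R)
    {d : σ →₀ ℕ} {N : ℕ} (hd : d i ≤ N) :
    MvPowerSeries.coeff d (logOneSubMonomial μ c) =
      ∑ n ∈ Finset.range (N + 1), if d = n • μ then -((n : ℚ)⁻¹ • c ^ n) else 0 := by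
  have hμ : μ ≠ 0 := fun h => by simp [h] at hi
  rw [logOneSubMonomial, PowerSeries.coeff_subst
      (.of_constantCoeff_zero (MvPowerSeries.constantCoeff_monomial_of_ne_zero hμ _)),
    finsum_eq_sum_of_support_subset _ (s := Finset.range (N + 1))]
  · refine Finset.sum_congr rfl fun n _ => ?_
    rw [MvPowerSeries.monomial_pow, MvPowerSeries.coeff_monomial]
    split_ifs
    exacts [PowerSeries.coeff_log_smul_neg_pow n c, smul_zero _]
  · intro n hn
    rw [Function.mem_support, MvPowerSeries.monomial_pow, MvPowerSeries.coeff_monomial] at hn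
    split_ifs at hn with hdn
    · have : n ≤ d i := by
        rw [hdn, Finsupp.smul_apply, smul_eq_mul]
        exact Nat.le_mul_of_pos_right n hi
      simp only [Finset.coe_range, Set.mem_Iio]
      omega
    · exact absurd (smul_zero _) hn

end LogOneSubMonomial

section LogRatio
variable {σ : Type} {R : Type*} [CommRing R] [Algebra ℚ R] {μ : σ →₀ ℕ}

noncomputable def logRatio (μ : σ →₀ ℕ) (a : R) : MvPowerSeries σ R :=
  logOneSubMonomial μ 1 + logOneSubMonomial μ (a ^ 2) + 2 • -logOneSubMonomial μ a

theorem constantCoeff_logRatio (hμ : μ ≠ 0) (a : R) :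
    MvPowerSeries.constantCoeff (logRatio μ a) = 0 := by
  simp [logRatio, constantCoeff_logOneSubMonomial hμ]

theorem expPS_logRatio (hμ : μ ≠ 0) (a : R) :
    expPS (logRatio μ a) = (1 - MvPowerSeries.monomial μ 1) *
      (1 - MvPowerSeries.monomial μ (a ^ 2)) *
      MvPowerSeries.invOfUnit (1 - MvPowerSeries.monomial μ a) 1 ^ 2 := by
  have h := constantCoeff_logOneSubMonomial hμ (R := R)
  rw [logRatio, expPS_add (by simp [h]) (by simp [h]), expPS_add (h 1) (h _),
    expPS_nsmul (by simp [h]), expPS_logOneSubMonomial hμ, expPS_logOneSubMonomial hμ,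
    expPS_neg_logOneSubMonomial hμ]

theorem expPS_neg_logRatio (hμ : μ ≠ 0) (a : R) :
    expPS (-logRatio μ a) = (1 - MvPowerSeries.monomial μ a) ^ 2 *
      MvPowerSeries.invOfUnit (1 - MvPowerSeries.monomial μ 1) 1 *
      MvPowerSeries.invOfUnit (1 - MvPowerSeries.monomial μ (a ^ 2)) 1 := by
  have h := constantCoeff_logOneSubMonomial hμ (R := R)
  rw [show -logRatio μ a = 2 • logOneSubMonomial μ a + -logOneSubMonomial μ 1 +
      -logOneSubMonomial μ (a ^ 2) by rw [logRatio]; abel,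
    expPS_add (by simp [h]) (by simp [h]), expPS_add (by simp [h]) (by simp [h]),
    expPS_nsmul (h a), expPS_logOneSubMonomial hμ, expPS_neg_logOneSubMonomial hμ,
    expPS_neg_logOneSubMonomial hμ]

theorem coeff_logRatio [DecidableEq σ] {i : σ} (hi : 0 < μ i) (a : R) {d : σ →₀ ℕ} {N : ℕ}
    (hd : d i ≤ N) :
    MvPowerSeries.coeff d (logRatio μ a) =
      ∑ n ∈ Finset.range (N + 1), if d = n • μ then -((n : ℚ)⁻¹ • (1 - a ^ n) ^ 2) else 0 := by
  simp only [logRatio, map_add, map_nsmul, map_neg, coeff_logOneSubMonomial hi _ hd,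
    ← Finset.sum_neg_distrib, Finset.smul_sum, ← Finset.sum_add_distrib]
  refine Finset.sum_congr rfl fun n _ => ?_
  split_ifs
  · simp only [Algebra.smul_def, map_ofNat]
    ring
  · simp

end LogRatio

section DeformedPartitionFunction

theorem deg3_apply_zero (i j k : ℕ) : deg3 i j k 0 = i := by simp [deg3]
theorem deg3_apply_one (i j k : ℕ) : deg3 i j k 1 = j := by simp [deg3]
theorem deg3_apply_two (i j k : ℕ) : deg3 i j k 2 = k := by simp [deg3]

theorem deg3_eq_zero_iff {i j k : ℕ} : deg3 i j k = 0 ↔ i = 0 ∧ j = 0 ∧ k = 0 := by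
  refine ⟨fun h => ⟨?_, ?_, ?_⟩, fun ⟨hi, hj, hk⟩ => by simp [deg3, hi, hj, hk]⟩
  · simpa [deg3_apply_zero] using DFunLike.congr_fun h 0
  · simpa [deg3_apply_one] using DFunLike.congr_fun h 1
  · simpa [deg3_apply_two] using DFunLike.congr_fun h 2

theorem smul_deg3 (n i j k : ℕ) : n • deg3 i j k = deg3 (n * i) (n * j) (n * k) := by
  simp [deg3, Finsupp.smul_single]

noncomputable def logFactor65 (k l : ℕ) : MvPowerSeries (Fin 3) (Polynomial ℚ) :=
  l • logRatio (deg3 l (k + 1) k) Polynomial.X + l • logRatio (deg3 l k (k + 1)) Polynomial.X +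
    (2 * l) • -logRatio (deg3 l (k + 1) (k + 1)) Polynomial.X

theorem constantCoeff_logFactor65 (k l : ℕ) :
    MvPowerSeries.constantCoeff (logFactor65 k l) = 0 := by
  simp [logFactor65, constantCoeff_logRatio, deg3_eq_zero_iff]

theorem expPS_logFactor65 (k l : ℕ) : expPS (logFactor65 k l) = factor65 k l := by
  have h₁ : deg3 l (k + 1) k ≠ 0 := by simp [deg3_eq_zero_iff]
  have h₂ : deg3 l k (k + 1) ≠ 0 := by simp [deg3_eq_zero_iff]
  have h₃ : deg3 l (k + 1) (k + 1) ≠ 0 := by simp [deg3_eq_zero_iff]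
  rw [logFactor65, expPS_add (by simp [constantCoeff_logRatio h₁, constantCoeff_logRatio h₂])
      (by simp [constantCoeff_logRatio h₃]),
    expPS_add (by simp [constantCoeff_logRatio h₁]) (by simp [constantCoeff_logRatio h₂]),
    expPS_nsmul (constantCoeff_logRatio h₁ _), expPS_nsmul (constantCoeff_logRatio h₂ _),
    expPS_nsmul (by simp [constantCoeff_logRatio h₃]), expPS_logRatio h₁, expPS_logRatio h₂,
    expPS_neg_logRatio h₃]
  rfl

noncomputable def expArg65Term (d : Fin 3 →₀ ℕ) (n s l : ℕ) : Polynomial ℚ :=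
  if 1 ≤ n ∧ 1 ≤ l then
    (((n : ℚ))⁻¹ * (l : ℚ)) • (((1 - Polynomial.X ^ n) ^ 2 : Polynomial ℚ) *
      ((if d = deg3 (n * l) (n * s + n) (n * s) then (-1 : Polynomial ℚ) else 0) +
       (if d = deg3 (n * l) (n * s) (n * s + n) then (-1 : Polynomial ℚ) else 0) +
       (if d = deg3 (n * l) (n * s + n) (n * s + n) then (2 : Polynomial ℚ) else 0)))
  else 0

theorem coeff_expArg65 (d : Fin 3 →₀ ℕ) :
    MvPowerSeries.coeff d expArg65 = ∑ᶠ (n) (s) (l), expArg65Term d n s l := rfl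

theorem expArg65Term_eq (d : Fin 3 →₀ ℕ) (n s l : ℕ) :
    expArg65Term d n s l =
      l • (if d = n • deg3 l (s + 1) s then -((n : ℚ)⁻¹ • (1 - Polynomial.X ^ n) ^ 2) else 0) +
      l • (if d = n • deg3 l s (s + 1) then -((n : ℚ)⁻¹ • (1 - Polynomial.X ^ n) ^ 2) else 0) +
      (2 * l) • -(if d = n • deg3 l (s + 1) (s + 1) then
        -((n : ℚ)⁻¹ • (1 - Polynomial.X ^ n) ^ 2) else 0) := by
  simp only [smul_deg3, Nat.mul_succ, expArg65Term]
  by_cases hnl : 1 ≤ n ∧ 1 ≤ l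
  · rw [if_pos hnl]
    simp only [nsmul_eq_mul, Nat.cast_mul, Nat.cast_ofNat]
    split_ifs <;> simp only [Algebra.smul_def, map_mul, map_natCast] <;> ring
  · rw [if_neg hnl]
    rcases Nat.lt_or_ge n 1 with hn | hl
    · simp [Nat.lt_one_iff.1 hn]
    · simp [Nat.lt_one_iff.1 (by omega : l < 1)]

theorem coeff_logFactor65 {d : Fin 3 →₀ ℕ} {k l N : ℕ} (hl : 1 ≤ l) (hd : d 0 ≤ N) :
    MvPowerSeries.coeff d (logFactor65 k l) =
      ∑ n ∈ Finset.range (N + 1), expArg65Term d n k l := by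
  have hcoeff (i j : ℕ) := coeff_logRatio (μ := deg3 l i j) (i := 0)
    (by rw [deg3_apply_zero]; omega) (Polynomial.X : Polynomial ℚ) hd
  simp only [logFactor65, map_add, map_nsmul, map_neg, hcoeff, Finset.smul_sum,
    ← Finset.sum_neg_distrib, ← Finset.sum_add_distrib, expArg65Term_eq]

theorem expArg65Term_ne_zero {d : Fin 3 →₀ ℕ} {n s l : ℕ} (h : expArg65Term d n s l ≠ 0) :
    1 ≤ n ∧ 1 ≤ l ∧ n * l = d 0 ∧ n * (2 * s + 1) ≤ d 1 + d 2 := by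
  by_cases hnl : 1 ≤ n ∧ 1 ≤ l
  swap
  · rw [expArg65Term, if_neg hnl] at h
    exact absurd rfl h
  have hd : d = deg3 (n * l) (n * s + n) (n * s) ∨ d = deg3 (n * l) (n * s) (n * s + n) ∨
      d = deg3 (n * l) (n * s + n) (n * s + n) := by
    by_contra! hne
    apply h
    simp [expArg65Term, hnl, hne.1, hne.2.1, hne.2.2]
  refine ⟨hnl.1, hnl.2, ?_⟩
  rcases hd with rfl | rfl | rfl <;>
    rw [deg3_apply_zero, deg3_apply_one, deg3_apply_two] <;> exact ⟨rfl, by nlinarith⟩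

theorem coeff_expArg65_eq_coeff_sum_logFactor65 {e d : Fin 3 →₀ ℕ} {K L : ℕ}
    (hK : e 1 + e 2 ≤ K) (hL : e 0 ≤ L) (hd : d ≤ e) :
    MvPowerSeries.coeff d expArg65 =
      MvPowerSeries.coeff d (∑ k ∈ Finset.range K, ∑ l ∈ Finset.Icc 1 L, logFactor65 k l) := by
  have hd' := Finsupp.le_def.1 hd
  rw [coeff_expArg65, finsum_finsum_finsum_eq_sum (A := Finset.range (L + 1))
    (B := Finset.range K) (C := Finset.Icc 1 L)]
  · simp only [map_sum]
    rw [Finset.sum_comm]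
    refine Finset.sum_congr rfl fun k _ => ?_
    rw [Finset.sum_comm]
    refine Finset.sum_congr rfl fun l hl => ?_
    rw [coeff_logFactor65 (Finset.mem_Icc.1 hl).1 ((hd' 0).trans hL)]
  · intro n s l h
    obtain ⟨hn, hl, h0, h12⟩ := expArg65Term_ne_zero h
    have := hd' 0; have := hd' 1; have := hd' 2
    have := Nat.le_mul_of_pos_right n hl
    have := Nat.le_mul_of_pos_left l hn
    have := Nat.le_mul_of_pos_left (2 * s + 1) hn
    simp only [Finset.mem_range, Finset.mem_Icc]
    omega

end DeformedPartitionFunction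

/-- The coefficientwise convergent infinite product is stated through its truncations
`k < K`, `l ≤ L`, which are exact at `e` as soon as `K ≥ e₁ + e₂` and `L ≥ e₀`. -/
theorem deformed_Z_product_form (e : Fin 3 →₀ ℕ) (K L : ℕ)
    (hK : e 1 + e 2 ≤ K) (hL : e 0 ≤ L) :
    MvPowerSeries.coeff (R := Polynomial ℚ) e (expPS expArg65) =
      MvPowerSeries.coeff (R := Polynomial ℚ) e
        (∏ k ∈ Finset.range K, ∏ l ∈ Finset.Icc 1 L, factor65 k l) := by
  rw [coeff_expPS_congr fun d hd => coeff_expArg65_eq_coeff_sum_logFactor65 hK hL hd,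
    expPS_sum _ fun k _ => by simp [constantCoeff_logFactor65]]
  simp only [expPS_sum _ fun l _ => constantCoeff_logFactor65 _ l, expPS_logFactor65]
end
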